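/- Every sesqui-pushout rewrite step with an injective matching can be simulated by polarized-cloning rewriting: given a span ρ = (L ← K → R) of graphs, define the polarized rule ρ' with K_N⁺ = K_N⁻ = K_N, K_E⋆ = ∅, L_N⁺ = L_N⁻ = L_N, L_E⋆ = ∅. Then for every injective matching m : L → G, if G ⇒_sqpo,ρ H then G ⇒_pc,ρ' H. -/

import Mathlib

universe u

structure RGraph : Type (u + 1) where
  N : Type u
  E : Type u
  src : E → N
  tgt : E → N

@[ext]
structure GraphHom (X Y : RGraph.{u}) where
  fN : X.N → Y.N
  fE : X.E → Y.E
  hsrc : ∀ e, Y.src (fE e) = fN (X.src e)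
  htgt : ∀ e, Y.tgt (fE e) = fN (X.tgt e)

def GraphHom.id (X : RGraph.{u}) : GraphHom X X :=
  ⟨_root_.id, _root_.id, fun _ => rfl, fun _ => rfl⟩

/-- `g.comp f` is the composite `g ∘ f`. -/
def GraphHom.comp {X Y Z : RGraph.{u}} (g : GraphHom Y Z) (f : GraphHom X Y) :
    GraphHom X Z :=
  ⟨g.fN ∘ f.fN, g.fE ∘ f.fE,
    fun e => by simp [Function.comp, g.hsrc, f.hsrc],
    fun e => by simp [Function.comp, g.htgt, f.htgt]⟩

/-- A polarization of a graph: distinguished node subsets `N⁺`, `N⁻` and a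
distinguished edge subset `E⋆` such that every edge in `E⋆` has its source
in `N⁺` and its target in `N⁻`. -/
structure Polarization (X : RGraph.{u}) where
  Np : Set X.N
  Nm : Set X.N
  Es : Set X.E
  hs : ∀ e ∈ Es, X.src e ∈ Np
  ht : ∀ e ∈ Es, X.tgt e ∈ Nm

/-- A polarized graph: a graph together with a polarization. -/
structure PGraph : Type (u + 1) where
  toGraph : RGraph.{u}
  pol : Polarization toGraph

/-- A morphism of polarized graphs: a graph morphism preserving the three
distinguished subsets. -/
structure PGraphHom (X Y : PGraph.{u}) where
  toHom : GraphHom X.toGraph Y.toGraph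
  hNp : ∀ n ∈ X.pol.Np, toHom.fN n ∈ Y.pol.Np
  hNm : ∀ n ∈ X.pol.Nm, toHom.fN n ∈ Y.pol.Nm
  hEs : ∀ e ∈ X.pol.Es, toHom.fE e ∈ Y.pol.Es

def PGraphHom.id (X : PGraph.{u}) : PGraphHom X X :=
  ⟨GraphHom.id X.toGraph, fun _ h => h, fun _ h => h, fun _ h => h⟩

/-- `g.comp f` is the composite `g ∘ f`. -/
def PGraphHom.comp {X Y Z : PGraph.{u}} (g : PGraphHom Y Z) (f : PGraphHom X Y) :
    PGraphHom X Z :=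
  ⟨g.toHom.comp f.toHom,
    fun n h => g.hNp _ (f.hNp n h),
    fun n h => g.hNm _ (f.hNm n h),
    fun e h => g.hEs _ (f.hEs e h)⟩

/-- A matching of polarized graphs: a monomorphism (equivalently: both
components injective) strictly reflecting the polarization. -/
def Matching {X Y : PGraph.{u}} (f : PGraphHom X Y) : Prop :=
  Function.Injective f.toHom.fN ∧ Function.Injective f.toHom.fE ∧
  (∀ n, f.toHom.fN n ∈ Y.pol.Np ↔ n ∈ X.pol.Np) ∧
  (∀ n, f.toHom.fN n ∈ Y.pol.Nm ↔ n ∈ X.pol.Nm) ∧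
  (∀ e, f.toHom.fE e ∈ Y.pol.Es ↔ e ∈ X.pol.Es)

/-- `(l, d)` is the pullback of `(m, l₁)` in the category of graphs. -/
def IsPullbackSquare {K L D G : RGraph.{u}} (l : GraphHom K L)
    (d : GraphHom K D) (m : GraphHom L G) (l₁ : GraphHom D G) : Prop :=
  m.comp l = l₁.comp d ∧
  ∀ (K' : RGraph.{u}) (l' : GraphHom K' L) (d' : GraphHom K' D),
    m.comp l' = l₁.comp d' →
    ∃! κ : GraphHom K' K, l.comp κ = l' ∧ d.comp κ = d'

/-- `(l₁, d)` is the final pullback complement of `(m, l)` in graphs. -/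
def IsFinalPBC {K L D G : RGraph.{u}} (m : GraphHom L G) (l : GraphHom K L)
    (d : GraphHom K D) (l₁ : GraphHom D G) : Prop :=
  IsPullbackSquare l d m l₁ ∧
  ∀ (D' : RGraph.{u}) (d' : GraphHom K D') (l₁' : GraphHom D' G),
    IsPullbackSquare l d' m l₁' →
    ∃! δ : GraphHom D' D, δ.comp d' = d ∧ l₁.comp δ = l₁'

/-- `(r₁, h)` is the pushout of `(d, r)` in the category of graphs. -/
def IsPushoutSquare {K R D H : RGraph.{u}} (d : GraphHom K D)
    (r : GraphHom K R) (r₁ : GraphHom D H) (h : GraphHom R H) : Prop :=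
  r₁.comp d = h.comp r ∧
  ∀ (H' : RGraph.{u}) (r₁' : GraphHom D H') (h' : GraphHom R H'),
    r₁'.comp d = h'.comp r →
    ∃! η : GraphHom H H', η.comp r₁ = r₁' ∧ η.comp h = h'

/-- `(l, d)` is the pullback of `(m, l₁)` in polarized graphs. -/
def IsPPullbackSquare {K L D G : PGraph.{u}} (l : PGraphHom K L)
    (d : PGraphHom K D) (m : PGraphHom L G) (l₁ : PGraphHom D G) : Prop :=
  m.comp l = l₁.comp d ∧
  ∀ (K' : PGraph.{u}) (l' : PGraphHom K' L) (d' : PGraphHom K' D),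
    m.comp l' = l₁.comp d' →
    ∃! κ : PGraphHom K' K, l.comp κ = l' ∧ d.comp κ = d'

/-- All linking edges for `f` (edges of the codomain outside the image of
`f` with some endpoint in the image of `f`) are polarized. -/
def LinkPolarized {X Y : PGraph.{u}} (f : PGraphHom X Y) : Prop :=
  ∀ e : Y.toGraph.E, e ∉ Set.range f.toHom.fE →
    (Y.toGraph.src e ∈ Set.range f.toHom.fN ∨
     Y.toGraph.tgt e ∈ Set.range f.toHom.fN) →
    e ∈ Y.pol.Es

/-- A polarized pullback complement of `(m, l)`. -/
def IsPolarizedPBC {K L D G : PGraph.{u}} (m : PGraphHom L G)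
    (l : PGraphHom K L) (d : PGraphHom K D) (l₁ : PGraphHom D G) : Prop :=
  IsPPullbackSquare l d m l₁ ∧ LinkPolarized m ∧ LinkPolarized d

/-- `(l₁, d)` is the polarized pushback (terminal polarized pullback
complement) of `(m, l)`. -/
def IsPolarizedPushback {K L D G : PGraph.{u}} (m : PGraphHom L G)
    (l : PGraphHom K L) (d : PGraphHom K D) (l₁ : PGraphHom D G) : Prop :=
  IsPolarizedPBC m l d l₁ ∧
  ∀ (D' : PGraph.{u}) (d' : PGraphHom K D') (l₁' : PGraphHom D' G),
    IsPolarizedPBC m l d' l₁' →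
    ∃! δ : PGraphHom D' D, δ.comp d' = d ∧ l₁.comp δ = l₁'

/-- `mp` exhibits its codomain as the *maximal* polarization of `G`
preserving the polarization of `L`: `mp` is a matching, every node outside
the image of `mp` is polarized both `+` and `-`, and an edge outside the
image of `mp` is polarized exactly when its source is in `N⁺` and its
target is in `N⁻`. -/
def MaxPol {L G : PGraph.{u}} (mp : PGraphHom L G) : Prop :=
  Matching mp ∧
  (∀ n, n ∉ Set.range mp.toHom.fN → n ∈ G.pol.Np ∧ n ∈ G.pol.Nm) ∧
  (∀ e, e ∉ Set.range mp.toHom.fE →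
    (e ∈ G.pol.Es ↔
      G.toGraph.src e ∈ G.pol.Np ∧ G.toGraph.tgt e ∈ G.pol.Nm))

/-- The rewrite step `G ⇒_pc H` of graph rewriting with polarized cloning,
with respect to a rule `(l : 𝐊 → 𝐋, r : K → R)` and a matching `m : L → G`:
(1) equip `G` with the maximal polarization preserving that of `L`;
(2) take the polarized pushback of `(m, l)` in polarized graphs;
(3) forget the polarization;
(4) take the pushout of `(d, r)` in graphs, yielding `H`. -/
def PCStep {K L : PGraph.{u}} (l : PGraphHom K L) {R : RGraph.{u}}
    (r : GraphHom K.toGraph R) {G : RGraph.{u}}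
    (m : GraphHom L.toGraph G) (H : RGraph.{u}) : Prop :=
  ∃ (Gpol : Polarization G) (mp : PGraphHom L ⟨G, Gpol⟩),
    mp.toHom = m ∧ MaxPol mp ∧
    ∃ (Dp : PGraph.{u}) (d : PGraphHom K Dp)
      (l₁ : PGraphHom Dp ⟨G, Gpol⟩),
      IsPolarizedPushback mp l d l₁ ∧
      ∃ (r₁ : GraphHom Dp.toGraph H) (h : GraphHom R H),
        IsPushoutSquare d.toHom r r₁ h

/-- The sesqui-pushout rewrite step `G ⇒_sqpo H` with rule `L ← K → R` and
matching `m : L → G`: take the final pullback complement of `(m, l)` in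
graphs to get `D`, then the pushout of `(d, r)` to get `H`. -/
def SqPOStep {K L R : RGraph.{u}} (l : GraphHom K L) (r : GraphHom K R)
    {G : RGraph.{u}} (m : GraphHom L G) (H : RGraph.{u}) : Prop :=
  ∃ (D : RGraph.{u}) (d : GraphHom K D) (l₁ : GraphHom D G),
    IsFinalPBC m l d l₁ ∧
    ∃ (r₁ : GraphHom D H) (h : GraphHom R H),
      IsPushoutSquare d r r₁ h

/-- The fully polarized graph on `X`: `N⁺ = N⁻ = N`, `E⋆ = ∅`. -/
def fullyPolarized (X : RGraph.{u}) : PGraph.{u} :=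
  ⟨X, ⟨Set.univ, Set.univ, ∅,
    fun _ he => absurd he (Set.notMem_empty _),
    fun _ he => absurd he (Set.notMem_empty _)⟩⟩

/-- The polarized rule `ρ'` associated to a span `L ← K → R` of graphs:
`K⁺ = K⁻ = K_N`, `K⋆ = ∅`, `L⁺ = L⁻ = L_N`, `L⋆ = ∅`. -/
def spanPolarizedRule {K L : RGraph.{u}} (l : GraphHom K L) :
    PGraphHom (fullyPolarized K) (fullyPolarized L) :=
  ⟨l, fun _ _ => Set.mem_univ _, fun _ _ => Set.mem_univ _,
    fun _ he => absurd he (Set.notMem_empty _)⟩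

/-!
Polarize `G` by marking every node, and exactly the edges outside the image of `m`; this is the
maximal polarization extending the full one of `L`. Polarize the final pullback complement `D` by
pulling that polarization back along `l₁`. A graph pullback with fully polarized corner `K` is a
polarized pullback, and forgetting polarizations preserves pullbacks, so every competing polarized
pullback complement factors uniquely through `D` by finality; the factorization is polarized
because `l₁'` is. The link condition for `d` holds because an edge of `D` sent into `m(L)` comes
from `K` by the pullback property.
-/

theorem PGraphHom.toHom_injective {X Y : PGraph.{u}} :
    Function.Injective (PGraphHom.toHom : PGraphHom X Y → GraphHom X.toGraph Y.toGraph) := by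
  rintro ⟨f, _, _, _⟩ ⟨g, _, _, _⟩ rfl
  rfl

def walkingEdge : RGraph.{u} :=
  ⟨ULift Bool, PUnit.{u + 1}, fun _ => ⟨false⟩, fun _ => ⟨true⟩⟩

def GraphHom.ofEdge (X : RGraph.{u}) (e : X.E) : GraphHom walkingEdge X :=
  ⟨fun b => if b.down then X.tgt e else X.src e, fun _ => e, fun _ => rfl, fun _ => rfl⟩

theorem IsPullbackSquare.exists_edge {K L D G : RGraph.{u}} {l : GraphHom K L}
    {d : GraphHom K D} {m : GraphHom L G} {l₁ : GraphHom D G}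
    (hpb : IsPullbackSquare l d m l₁) {e' : L.E} {e : D.E} (he : m.fE e' = l₁.fE e) :
    ∃ e₀ : K.E, l.fE e₀ = e' ∧ d.fE e₀ = e := by
  have hcomm : m.comp (.ofEdge L e') = l₁.comp (.ofEdge D e) := by
    ext b
    · rcases b with ⟨_ | _⟩
      · exact (m.hsrc e').symm.trans ((congrArg G.src he).trans (l₁.hsrc e))
      · exact (m.htgt e').symm.trans ((congrArg G.tgt he).trans (l₁.htgt e))
    · exact he
  obtain ⟨κ, ⟨hl, hd⟩, -⟩ := hpb.2 walkingEdge _ _ hcomm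
  exact ⟨κ.fE PUnit.unit, congrFun (congrArg GraphHom.fE hl) _,
    congrFun (congrArg GraphHom.fE hd) _⟩

def Polarization.empty (X : RGraph.{u}) : Polarization X :=
  ⟨∅, ∅, ∅, fun _ he => he.elim, fun _ he => he.elim⟩

def PGraphHom.ofEmpty {X : RGraph.{u}} {Y : PGraph.{u}} (f : GraphHom X Y.toGraph) :
    PGraphHom ⟨X, .empty X⟩ Y :=
  ⟨f, fun _ hn => hn.elim, fun _ hn => hn.elim, fun _ he => he.elim⟩

/-- Polarized homs out of a graph with the empty polarization are just graph homs. -/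
theorem IsPPullbackSquare.isPullbackSquare {K L D G : PGraph.{u}} {l : PGraphHom K L}
    {d : PGraphHom K D} {m : PGraphHom L G} {l₁ : PGraphHom D G}
    (hpb : IsPPullbackSquare l d m l₁) :
    IsPullbackSquare l.toHom d.toHom m.toHom l₁.toHom := by
  refine ⟨congrArg PGraphHom.toHom hpb.1, fun K' l' d' hcomm => ?_⟩
  obtain ⟨κ, ⟨hl, hd⟩, huniq⟩ :=
    hpb.2 ⟨K', .empty K'⟩ (.ofEmpty l') (.ofEmpty d') (PGraphHom.toHom_injective hcomm)
  refine ⟨κ.toHom, ⟨congrArg PGraphHom.toHom hl, congrArg PGraphHom.toHom hd⟩,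
    fun κ' ⟨hl', hd'⟩ => ?_⟩
  exact congrArg PGraphHom.toHom
    (huniq (.ofEmpty κ') ⟨PGraphHom.toHom_injective hl', PGraphHom.toHom_injective hd'⟩)

theorem isPPullbackSquare_of_isPullbackSquare {K L D G : PGraph.{u}} {l : PGraphHom K L}
    {d : PGraphHom K D} {m : PGraphHom L G} {l₁ : PGraphHom D G}
    (hpb : IsPullbackSquare l.toHom d.toHom m.toHom l₁.toHom)
    (hNp : ∀ n, l.toHom.fN n ∈ L.pol.Np → d.toHom.fN n ∈ D.pol.Np → n ∈ K.pol.Np)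
    (hNm : ∀ n, l.toHom.fN n ∈ L.pol.Nm → d.toHom.fN n ∈ D.pol.Nm → n ∈ K.pol.Nm)
    (hEs : ∀ e, l.toHom.fE e ∈ L.pol.Es → d.toHom.fE e ∈ D.pol.Es → e ∈ K.pol.Es) :
    IsPPullbackSquare l d m l₁ := by
  refine ⟨PGraphHom.toHom_injective hpb.1, fun K' l' d' hcomm => ?_⟩
  obtain ⟨κ, ⟨hl, hd⟩, huniq⟩ :=
    hpb.2 K'.toGraph l'.toHom d'.toHom (congrArg PGraphHom.toHom hcomm)
  have hlN n : l.toHom.fN (κ.fN n) = l'.toHom.fN n := congrFun (congrArg GraphHom.fN hl) n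
  have hdN n : d.toHom.fN (κ.fN n) = d'.toHom.fN n := congrFun (congrArg GraphHom.fN hd) n
  have hlE e : l.toHom.fE (κ.fE e) = l'.toHom.fE e := congrFun (congrArg GraphHom.fE hl) e
  have hdE e : d.toHom.fE (κ.fE e) = d'.toHom.fE e := congrFun (congrArg GraphHom.fE hd) e
  let κp : PGraphHom K' K :=
    ⟨κ, fun n hn => hNp _ (hlN n ▸ l'.hNp n hn) (hdN n ▸ d'.hNp n hn),
      fun n hn => hNm _ (hlN n ▸ l'.hNm n hn) (hdN n ▸ d'.hNm n hn),
      fun e he => hEs _ (hlE e ▸ l'.hEs e he) (hdE e ▸ d'.hEs e he)⟩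
  refine ⟨κp, ⟨PGraphHom.toHom_injective hl, PGraphHom.toHom_injective hd⟩,
    fun κ' ⟨hl', hd'⟩ => PGraphHom.toHom_injective ?_⟩
  exact huniq κ'.toHom ⟨congrArg PGraphHom.toHom hl', congrArg PGraphHom.toHom hd'⟩

def Polarization.comap {X Y : RGraph.{u}} (f : GraphHom X Y) (P : Polarization Y) :
    Polarization X :=
  ⟨f.fN ⁻¹' P.Np, f.fN ⁻¹' P.Nm, f.fE ⁻¹' P.Es,
    fun e he => by simpa only [Set.mem_preimage, f.hsrc] using P.hs _ he,
    fun e he => by simpa only [Set.mem_preimage, f.htgt] using P.ht _ he⟩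

def PGraphHom.ofComap {X Y : RGraph.{u}} (f : GraphHom X Y) (P : Polarization Y) :
    PGraphHom ⟨X, P.comap f⟩ ⟨Y, P⟩ :=
  ⟨f, fun _ hn => hn, fun _ hn => hn, fun _ he => he⟩

def PGraphHom.liftComap {X : PGraph.{u}} {D G : RGraph.{u}} {g : GraphHom D G}
    {P : Polarization G} (δ : GraphHom X.toGraph D) (f : PGraphHom X ⟨G, P⟩)
    (h : g.comp δ = f.toHom) : PGraphHom X ⟨D, P.comap g⟩ :=
  have hN n : g.fN (δ.fN n) = f.toHom.fN n := congrFun (congrArg GraphHom.fN h) n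
  have hE e : g.fE (δ.fE e) = f.toHom.fE e := congrFun (congrArg GraphHom.fE h) e
  ⟨δ, fun n hn => show g.fN (δ.fN n) ∈ P.Np from hN n ▸ f.hNp n hn,
    fun n hn => show g.fN (δ.fN n) ∈ P.Nm from hN n ▸ f.hNm n hn,
    fun e he => show g.fE (δ.fE e) ∈ P.Es from hE e ▸ f.hEs e he⟩

def maxPolarization {L G : RGraph.{u}} (m : GraphHom L G) : Polarization G :=
  ⟨Set.univ, Set.univ, (Set.range m.fE)ᶜ, fun _ _ => trivial, fun _ _ => trivial⟩

def maxPolarizationHom {L G : RGraph.{u}} (m : GraphHom L G) :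
    PGraphHom (fullyPolarized L) ⟨G, maxPolarization m⟩ :=
  ⟨m, fun _ _ => trivial, fun _ _ => trivial, fun _ he => he.elim⟩

theorem maxPol_maxPolarizationHom {L G : RGraph.{u}} {m : GraphHom L G}
    (hmN : Function.Injective m.fN) (hmE : Function.Injective m.fE) :
    MaxPol (maxPolarizationHom m) := by
  refine ⟨⟨hmN, hmE, fun _ => iff_of_true trivial trivial, fun _ => iff_of_true trivial trivial,
    fun e => iff_of_false (· (Set.mem_range_self e)) id⟩,
    fun _ _ => ⟨trivial, trivial⟩, fun _ he => iff_of_true he ⟨trivial, trivial⟩⟩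

theorem linkPolarized_maxPolarizationHom {L G : RGraph.{u}} (m : GraphHom L G) :
    LinkPolarized (maxPolarizationHom m) :=
  fun _ he _ => he

section Pushback

variable {K L D G : RGraph.{u}} {l : GraphHom K L} {d : GraphHom K D} {l₁ : GraphHom D G}
  {P : Polarization G} {mp : PGraphHom (fullyPolarized L) ⟨G, P⟩}

abbrev pushbackLeg (hcomm : mp.toHom.comp l = l₁.comp d) :
    PGraphHom (fullyPolarized K) ⟨D, P.comap l₁⟩ :=
  .liftComap d (mp.comp (spanPolarizedRule l)) hcomm.symm

theorem linkPolarized_pushbackLeg (hlink : LinkPolarized mp)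
    (hpb : IsPullbackSquare l d mp.toHom l₁) : LinkPolarized (pushbackLeg hpb.1) := by
  intro e he hend
  have hcomm n : mp.toHom.fN (l.fN n) = l₁.fN (d.fN n) := congrFun (congrArg GraphHom.fN hpb.1) n
  refine hlink (l₁.fE e) (fun ⟨e', he'⟩ => he ?_) ?_
  · obtain ⟨e₀, -, hde₀⟩ := hpb.exists_edge he'
    exact ⟨e₀, hde₀⟩
  · show G.src (l₁.fE e) ∈ _ ∨ G.tgt (l₁.fE e) ∈ _
    rw [l₁.hsrc, l₁.htgt]
    rcases hend with ⟨k, hk⟩ | ⟨k, hk⟩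
    · exact .inl ⟨l.fN k, (hcomm k).trans (congrArg l₁.fN hk)⟩
    · exact .inr ⟨l.fN k, (hcomm k).trans (congrArg l₁.fN hk)⟩

theorem isPolarizedPBC_pushbackLeg (hlink : LinkPolarized mp)
    (hpb : IsPullbackSquare l d mp.toHom l₁) :
    IsPolarizedPBC mp (spanPolarizedRule l) (pushbackLeg hpb.1) (.ofComap l₁ P) :=
  ⟨isPPullbackSquare_of_isPullbackSquare hpb (fun _ _ _ => trivial) (fun _ _ _ => trivial)
    (fun _ he _ => he.elim), hlink, linkPolarized_pushbackLeg hlink hpb⟩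

theorem isPolarizedPushback_of_isFinalPBC (hlink : LinkPolarized mp)
    (hfpbc : IsFinalPBC mp.toHom l d l₁) :
    IsPolarizedPushback mp (spanPolarizedRule l) (pushbackLeg hfpbc.1.1) (.ofComap l₁ P) := by
  refine ⟨isPolarizedPBC_pushbackLeg hlink hfpbc.1, fun D' d' l₁' hpbc' => ?_⟩
  obtain ⟨δ, ⟨hd, hl₁⟩, huniq⟩ := hfpbc.2 D'.toGraph d'.toHom l₁'.toHom hpbc'.1.isPullbackSquare
  refine ⟨.liftComap δ l₁' hl₁, ⟨PGraphHom.toHom_injective hd, PGraphHom.toHom_injective hl₁⟩,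
    fun δ' ⟨hd', hl₁'⟩ => PGraphHom.toHom_injective ?_⟩
  exact huniq δ'.toHom ⟨congrArg PGraphHom.toHom hd', congrArg PGraphHom.toHom hl₁'⟩

end Pushback

theorem sqpo_implies_pc {K L R : RGraph.{u}} (l : GraphHom K L)
    (r : GraphHom K R) {G : RGraph.{u}} (m : GraphHom L G)
    (hmN : Function.Injective m.fN) (hmE : Function.Injective m.fE)
    (H : RGraph.{u}) (hsqpo : SqPOStep l r m H) :
    PCStep (spanPolarizedRule l) r m H := by
  obtain ⟨D, d, l₁, hfpbc, r₁, h, hpo⟩ := hsqpo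
  exact ⟨maxPolarization m, maxPolarizationHom m, rfl, maxPol_maxPolarizationHom hmN hmE,
    _, _, _, isPolarizedPushback_of_isFinalPBC (linkPolarized_maxPolarizationHom m) hfpbc,
    r₁, h, hpo⟩
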